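/- arXiv:math/0606001 — 6 statements merged into one kernel-verified Lean document; each statement's English description precedes it below -/
import Mathlib

section
/- Let A be a commutative Banach ring and let v be a minimal element of P(A), the set of bounded submultiplicative seminorms on A ordered pointwise (i.e., v ∈ P(A) and every w ∈ P(A) with w(a) ≤ v(a) for all a satisfies w = v). Then v is multiplicative: v(ab) = v(a)·v(b) for all a, b ∈ A. -/
/-- `v` belongs to `P(A)`: it is a bounded submultiplicative seminorm on `A`. -/
def IsBddSubmultSeminorm {A : Type*} [NormedRing A] (v : A → ℝ) : Prop :=
  (∀ a : A, 0 ≤ v a) ∧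
  (∀ a b : A, v (a + b) ≤ v a + v b) ∧
  (∀ a : A, v (-a) = v a) ∧
  (∀ a b : A, v (a * b) ≤ v a * v b) ∧
  v 1 = 1 ∧
  (∃ C : ℝ, 0 < C ∧ ∀ a : A, v a ≤ C * ‖a‖)

/-!
Every ring seminorm below `v` inherits its bound, so `v` is minimal among ring seminorms `g` with
`g 1 = 1`. Let `f` be such a minimal seminorm.

*`f` is power-multiplicative.* If `f (a ^ m) < f a ^ m`, choose `0 < s < f a` with
`f (a ^ m) ≤ s ^ m`; then `f (a ^ j) ≤ M s ^ j` for all `j`. Push the weighted `ℓ¹` seminorm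
`∑ f (pₙ) sⁿ` on `R[X]` forward along evaluation at `a`. The resulting seminorm `g` satisfies
`g ≤ f`, `g a ≤ s` and `f ≤ M g` (so `g 1 = 1`). Minimality forces `g = f`, and then
`f a ≤ s < f a`.

*`f` is multiplicative.* For `f a ≠ 0`, the seminorm `x ↦ lim f (x aⁿ) / f (a)ⁿ` (Mathlib's
`seminormFromConst`) lies below `f` and is multiplicative at `a`. Minimality makes it equal to `f`.
-/

open Polynomial

theorem exists_pos_lt_and_le_pow {r x : ℝ} {m : ℕ} (hm : m ≠ 0) (hr : 0 ≤ r) (hx : 0 < x)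
    (h : r < x ^ m) : ∃ s, 0 < s ∧ s < x ∧ r ≤ s ^ m := by
  set t := r ^ (m⁻¹ : ℝ)
  have ht : 0 ≤ t := Real.rpow_nonneg hr _
  have htm : t ^ m = r := Real.rpow_inv_natCast_pow hr hm
  refine ⟨max t (x / 2), by positivity, max_lt ?_ (by linarith), ?_⟩
  · exact lt_of_pow_lt_pow_left₀ m hx.le (htm ▸ h)
  · exact htm ▸ pow_le_pow_left₀ ht (le_max_left _ _) m

namespace Polynomial

variable {R : Type*} [Ring R] (f : RingSeminorm R) (s : ℝ)

noncomputable def weightedL1 (p : R[X]) : ℝ := p.sum fun n c => f c * s ^ n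

variable {f s}

theorem weightedL1_eq_sum_range {p : R[X]} {N : ℕ} (hN : p.natDegree < N) :
    p.weightedL1 f s = ∑ n ∈ Finset.range N, f (p.coeff n) * s ^ n :=
  sum_over_range' p (fun n => by simp) N hN

theorem weightedL1_monomial (n : ℕ) (c : R) : (monomial n c).weightedL1 f s = f c * s ^ n :=
  sum_monomial_index c _ (by simp)

theorem weightedL1_C (c : R) : (C c).weightedL1 f s = f c := by
  simpa using weightedL1_monomial (f := f) (s := s) 0 c

theorem weightedL1_X : (X : R[X]).weightedL1 f s = f 1 * s := by
  rw [← monomial_one_one_eq_X, weightedL1_monomial, pow_one]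

theorem weightedL1_add_le (hs : 0 ≤ s) (p q : R[X]) :
    (p + q).weightedL1 f s ≤ p.weightedL1 f s + q.weightedL1 f s := by
  have hN := natDegree_add_le p q
  rw [weightedL1_eq_sum_range (Nat.lt_succ_of_le hN),
    weightedL1_eq_sum_range (Nat.lt_succ_of_le (le_max_left _ _)),
    weightedL1_eq_sum_range (Nat.lt_succ_of_le (le_max_right _ _)), ← Finset.sum_add_distrib]
  gcongr with n
  rw [coeff_add, ← add_mul]
  gcongr
  exact map_add_le_add f _ _

theorem weightedL1_neg (p : R[X]) : (-p).weightedL1 f s = p.weightedL1 f s := by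
  simp [weightedL1, sum_def, support_neg]

theorem weightedL1_sum_le {ι : Type*} (hs : 0 ≤ s) (t : Finset ι) (p : ι → R[X]) :
    (∑ i ∈ t, p i).weightedL1 f s ≤ ∑ i ∈ t, (p i).weightedL1 f s :=
  Finset.le_sum_of_subadditive (weightedL1 f s) (sum_zero_index _).le (weightedL1_add_le hs) t p

theorem weightedL1_mul_le (hs : 0 ≤ s) (p q : R[X]) :
    (p * q).weightedL1 f s ≤ p.weightedL1 f s * q.weightedL1 f s := by
  rw [mul_eq_sum_sum]
  conv_rhs => rw [weightedL1, weightedL1, sum_def, sum_def, Finset.sum_mul_sum]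
  refine (weightedL1_sum_le hs _ _).trans (Finset.sum_le_sum fun i _ => ?_)
  rw [sum_def]
  refine (weightedL1_sum_le hs _ _).trans (Finset.sum_le_sum fun j _ => ?_)
  rw [weightedL1_monomial, pow_add]
  calc f (p.coeff i * q.coeff j) * (s ^ i * s ^ j)
      ≤ f (p.coeff i) * f (q.coeff j) * (s ^ i * s ^ j) := by
        gcongr; exact map_mul_le_mul f _ _
    _ = f (p.coeff i) * s ^ i * (f (q.coeff j) * s ^ j) := by ring

theorem map_eval_le_mul_weightedL1 {M : ℝ} {a : R} (ha : ∀ n, f (a ^ n) ≤ M * s ^ n)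
    (p : R[X]) : f (p.eval a) ≤ M * p.weightedL1 f s := by
  rw [eval_eq_sum, sum_def, weightedL1, sum_def, Finset.mul_sum]
  refine (Finset.le_sum_of_subadditive f (map_zero f).le (map_add_le_add f) _ _).trans
    (Finset.sum_le_sum fun n _ => ?_)
  calc f (p.coeff n * a ^ n) ≤ f (p.coeff n) * (M * s ^ n) :=
        (map_mul_le_mul f _ _).trans (by gcongr; exact ha n)
    _ = M * (f (p.coeff n) * s ^ n) := by ring

noncomputable def weightedL1Seminorm (f : RingSeminorm R) {s : ℝ} (hs : 0 ≤ s) :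
    RingSeminorm R[X] where
  toFun := weightedL1 f s
  map_zero' := sum_zero_index _
  add_le' := weightedL1_add_le hs
  neg' := weightedL1_neg
  mul_le' := weightedL1_mul_le hs

end Polynomial

namespace RingSeminorm

section Pushforward

variable {S R : Type*} [Ring S] [Ring R] (N : RingSeminorm S) {φ : S →+* R}

theorem iInf_fiber_le {x : R} (p : {p // φ p = x}) : ⨅ q : {q // φ q = x}, N q ≤ N p :=
  ciInf_le ⟨0, by rintro _ ⟨q, rfl⟩; exact apply_nonneg N _⟩ p

theorem iInf_fiber_nonneg (x : R) : 0 ≤ ⨅ q : {q // φ q = x}, N q :=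
  Real.iInf_nonneg fun _ => apply_nonneg N _

noncomputable def pushforward (hφ : Function.Surjective φ) : RingSeminorm R where
  toFun x := ⨅ p : {p // φ p = x}, N p
  map_zero' := le_antisymm ((N.iInf_fiber_le ⟨0, map_zero φ⟩).trans_eq (map_zero N))
    (N.iInf_fiber_nonneg 0)
  add_le' x y := by
    have := nonempty_subtype.2 (hφ x)
    have := nonempty_subtype.2 (hφ y)
    exact le_ciInf_add_ciInf fun p q =>
      (N.iInf_fiber_le ⟨p + q, by rw [map_add, p.2, q.2]⟩).trans (map_add_le_add N _ _)
  neg' x := by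
    have := nonempty_subtype.2 (hφ x)
    have := nonempty_subtype.2 (hφ (-x))
    refine le_antisymm (le_ciInf fun p => ?_) (le_ciInf fun p => ?_)
    · exact (N.iInf_fiber_le ⟨-p, by rw [map_neg, p.2]⟩).trans_eq (map_neg_eq_map N (p : S))
    · exact (N.iInf_fiber_le ⟨-p, by rw [map_neg, p.2, neg_neg]⟩).trans_eq (map_neg_eq_map N (p : S))
  mul_le' x y := by
    have := nonempty_subtype.2 (hφ x)
    have := nonempty_subtype.2 (hφ y)
    rw [Real.iInf_mul_of_nonneg (N.iInf_fiber_nonneg y)]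
    refine le_ciInf fun p => ?_
    rw [Real.mul_iInf_of_nonneg (apply_nonneg N (p : S))]
    refine le_ciInf fun q => ?_
    exact (N.iInf_fiber_le ⟨p * q, by rw [map_mul, p.2, q.2]⟩).trans (map_mul_le_mul N _ _)

variable (hφ : Function.Surjective φ)

theorem pushforward_apply_le {p : S} {x : R} (hp : φ p = x) : N.pushforward hφ x ≤ N p :=
  N.iInf_fiber_le ⟨p, hp⟩

theorem le_pushforward_apply {x : R} {c : ℝ} (h : ∀ p, φ p = x → c ≤ N p) :
    c ≤ N.pushforward hφ x :=
  have := nonempty_subtype.2 (hφ x)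
  le_ciInf fun p => h p p.2

end Pushforward

theorem map_pow_le_of_map_pow_le {R : Type*} [Ring R] (f : RingSeminorm R) (hf1 : f 1 ≤ 1)
    {a : R} {m : ℕ} {s : ℝ} (hs : 0 < s) (hsa : s ≤ f a) (ham : f (a ^ m) ≤ s ^ m)
    (hm : m ≠ 0) (j : ℕ) : f (a ^ j) ≤ (f a / s) ^ m * s ^ j := by
  induction j using Nat.strong_induction_on with
  | _ j ih =>
  rcases lt_or_ge j m with hjm | hjm
  · calc f (a ^ j) ≤ f a ^ j := map_pow_le_pow' hf1 a j
      _ = (f a / s) ^ j * s ^ j := by rw [← mul_pow, div_mul_cancel₀ _ hs.ne']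
      _ ≤ (f a / s) ^ m * s ^ j := by
        gcongr
        exact (one_le_div hs).2 hsa
  · obtain ⟨k, rfl⟩ := Nat.exists_eq_add_of_le hjm
    calc f (a ^ (m + k)) ≤ f (a ^ m) * f (a ^ k) := by rw [pow_add]; exact map_mul_le_mul f _ _
      _ ≤ s ^ m * ((f a / s) ^ m * s ^ k) := by
        gcongr
        exact ih k (by omega)
      _ = (f a / s) ^ m * s ^ (m + k) := by ring

variable {R : Type*} [CommRing R]

noncomputable def evalQuotient (f : RingSeminorm R) {s : ℝ} (hs : 0 ≤ s) (a : R) :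
    RingSeminorm R :=
  (weightedL1Seminorm f hs).pushforward (φ := evalRingHom a) fun x => ⟨C x, eval_C⟩

section EvalQuotient

variable (f : RingSeminorm R) {s : ℝ} (hs : 0 ≤ s) (a : R)

theorem evalQuotient_le (x : R) : f.evalQuotient hs a x ≤ f x :=
  ((weightedL1Seminorm f hs).pushforward_apply_le _ eval_C).trans_eq (weightedL1_C x)

theorem evalQuotient_self_le : f.evalQuotient hs a a ≤ f 1 * s :=
  ((weightedL1Seminorm f hs).pushforward_apply_le _ eval_X).trans_eq weightedL1_X

theorem div_le_evalQuotient {M : ℝ} (hM : 0 < M) (ha : ∀ n, f (a ^ n) ≤ M * s ^ n) (x : R) :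
    f x / M ≤ f.evalQuotient hs a x :=
  (weightedL1Seminorm f hs).le_pushforward_apply _ fun p hp => by
    rw [div_le_iff₀' hM, ← hp]
    exact map_eval_le_mul_weightedL1 ha p

theorem evalQuotient_map_one (hf1 : f 1 = 1) {M : ℝ} (hM : 0 < M)
    (ha : ∀ n, f (a ^ n) ≤ M * s ^ n) : f.evalQuotient hs a 1 = 1 := by
  have hpos : 0 < f.evalQuotient hs a 1 :=
    (div_pos (hf1 ▸ one_pos) hM).trans_le (f.div_le_evalQuotient hs a hM ha 1)
  exact (seminorm_one_eq_one_iff_ne_zero _ (hf1 ▸ f.evalQuotient_le hs a 1)).2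
    (ne_zero_iff.2 ⟨1, hpos.ne'⟩)

end EvalQuotient

def IsMinimal (f : RingSeminorm R) : Prop :=
  ∀ g : RingSeminorm R, g 1 = 1 → (∀ x, g x ≤ f x) → ∀ x, g x = f x

variable {f : RingSeminorm R}

theorem isPowMul_of_isMinimal (hf1 : f 1 = 1) (hmin : f.IsMinimal) : IsPowMul f := by
  intro a m hm
  refine le_antisymm (map_pow_le_pow f a (by omega)) (not_lt.1 fun hlt => ?_)
  have ha : 0 < f a := by
    refine (apply_nonneg f a).lt_of_ne' fun h => ?_
    rw [h, zero_pow (by omega)] at hlt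
    exact (apply_nonneg f _).not_gt hlt
  obtain ⟨s, hs, hsa, hsm⟩ := exists_pos_lt_and_le_pow (by omega) (apply_nonneg f _) ha hlt
  have hgrowth := f.map_pow_le_of_map_pow_le hf1.le hs hsa.le hsm (by omega)
  have hg1 := f.evalQuotient_map_one hs.le a hf1 (by positivity) hgrowth
  have hga := hmin _ hg1 (f.evalQuotient_le hs.le a) a
  have hgs := f.evalQuotient_self_le hs.le a
  rw [hga, hf1, one_mul] at hgs
  exact hsa.not_ge hgs

theorem map_mul_of_isMinimal (hf1 : f 1 = 1) (hmin : f.IsMinimal) (a b : R) :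
    f (a * b) = f a * f b := by
  rcases eq_or_ne (f a) 0 with ha | ha
  · rw [ha, zero_mul]
    exact le_antisymm ((map_mul_le_mul f a b).trans_eq (by rw [ha, zero_mul])) (apply_nonneg f _)
  have hpm := isPowMul_of_isMinimal hf1 hmin
  have hg := hmin (seminormFromConst hf1.le ha hpm) (seminormFromConst_one hf1.le ha hpm)
    (seminormFromConst_le_seminorm hf1.le ha hpm)
  calc f (a * b) = seminormFromConst hf1.le ha hpm (a * b) := (hg _).symm
    _ = seminormFromConst hf1.le ha hpm a * seminormFromConst hf1.le ha hpm b :=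
      seminormFromConst_const_mul hf1.le ha hpm b
    _ = f a * f b := by rw [hg, hg]

end RingSeminorm

namespace IsBddSubmultSeminorm

variable {A : Type*} [NormedRing A] {v : A → ℝ}

theorem map_zero (hv : IsBddSubmultSeminorm v) : v 0 = 0 := by
  obtain ⟨C, -, hC⟩ := hv.2.2.2.2.2
  exact le_antisymm (by simpa using hC 0) (hv.1 0)

def toRingSeminorm (hv : IsBddSubmultSeminorm v) : RingSeminorm A where
  toFun := v
  map_zero' := hv.map_zero
  add_le' := hv.2.1
  neg' := hv.2.2.1
  mul_le' := hv.2.2.2.1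

theorem of_le (hv : IsBddSubmultSeminorm v) (g : RingSeminorm A) (hg1 : g 1 = 1)
    (hle : ∀ x, g x ≤ v x) : IsBddSubmultSeminorm g := by
  obtain ⟨C, hC, hbound⟩ := hv.2.2.2.2.2
  exact ⟨apply_nonneg g, map_add_le_add g, map_neg_eq_map g, map_mul_le_mul g, hg1,
    C, hC, fun x => (hle x).trans (hbound x)⟩

end IsBddSubmultSeminorm

theorem minimal_seminorm_is_multiplicative_general {A : Type*} [NormedCommRing A]
    (v : A → ℝ) (hv : IsBddSubmultSeminorm v)
    (hmin : ∀ w : A → ℝ, IsBddSubmultSeminorm w → (∀ a : A, w a ≤ v a) → w = v) :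
    ∀ a b : A, v (a * b) = v a * v b :=
  hv.toRingSeminorm.map_mul_of_isMinimal hv.2.2.2.2.1
    fun g hg1 hle => congrFun (hmin g (hv.of_le g hg1 hle) hle)

/-- On a commutative Banach ring, any minimal bounded submultiplicative seminorm
is multiplicative. -/
theorem minimal_seminorm_is_multiplicative {A : Type*} [NormedCommRing A] [CompleteSpace A]
    (v : A → ℝ) (hv : IsBddSubmultSeminorm v)
    (hmin : ∀ w : A → ℝ, IsBddSubmultSeminorm w → (∀ a : A, w a ≤ v a) → w = v) :
    ∀ a b : A, v (a * b) = v a * v b :=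
  minimal_seminorm_is_multiplicative_general v hv hmin
end

section
/- Let A be a Banach ring with ‖1‖ = 1. Then the partially ordered set P(A) of bounded submultiplicative seminorms on A has a minimal element: there exists v ∈ P(A) such that every w ∈ P(A) with w(a) ≤ v(a) for all a ∈ A satisfies w = v. -/
/-! A Zorn argument in the reverse order: the pointwise infimum of a chain of bounded
submultiplicative seminorms is again one, because the chain is directed downwards, so for any
two members a third lies below both and the defining inequalities pass to the infimum. The
norm itself lies in `P(A)`, so `P(A)` is nonempty and Zorn's lemma gives a minimal element. -/

open OrderDual

theorem exists_minimal_of_chains_bddBelow₀ {α : Type*} [Preorder α] (s : Set α)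
    (ih : ∀ c ⊆ s, IsChain (· ≤ ·) c → c.Nonempty → ∃ lb ∈ s, ∀ z ∈ c, lb ≤ z)
    (hs : s.Nonempty) : ∃ m, Minimal (· ∈ s) m := by
  obtain ⟨x, hx⟩ := hs
  obtain ⟨m, -, hm⟩ := zorn_le_nonempty₀ (α := αᵒᵈ) (ofDual ⁻¹' s)
    (fun c hcs hc y hy => ih c hcs hc.symm ⟨y, hy⟩) (toDual x) hx
  exact ⟨ofDual m, hm⟩

section

variable {A : Type*} [NormedRing A]

theorem isBddSubmultSeminorm_norm [NormOneClass A] : IsBddSubmultSeminorm (‖·‖ : A → ℝ) :=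
  ⟨norm_nonneg, norm_add_le, norm_neg, norm_mul_le, norm_one, 1, one_pos, fun a => by simp⟩

theorem IsBddSubmultSeminorm.iInf {ι : Type*} [Nonempty ι] {v : ι → A → ℝ}
    (hv : ∀ i, IsBddSubmultSeminorm (v i)) (hdir : Directed (· ≥ ·) v) :
    IsBddSubmultSeminorm (fun a => ⨅ i, v i a) := by
  have nonneg (i : ι) (a : A) : 0 ≤ v i a := (hv i).1 a
  have hbdd (a : A) : BddBelow (Set.range fun i => v i a) :=
    ⟨0, by rintro _ ⟨i, rfl⟩; exact nonneg i a⟩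
  have below_pair (x a b : A) (i j : ι) :
      ∃ k, (⨅ i, v i x) ≤ v k x ∧ v k a ≤ v i a ∧ v k b ≤ v j b :=
    let ⟨k, hki, hkj⟩ := hdir i j
    ⟨k, ciInf_le (hbdd x) k, hki a, hkj b⟩
  obtain ⟨i₀⟩ := ‹Nonempty ι›
  refine ⟨fun a => le_ciInf fun i => nonneg i a, fun a b => ?add, fun a => ?neg,
    fun a b => ?mul, ?one, ?bdd⟩
  case add =>
    refine le_ciInf_add_ciInf fun i j => ?_
    obtain ⟨k, hk, hki, hkj⟩ := below_pair (a + b) a b i j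
    exact hk.trans (((hv k).2.1 a b).trans (add_le_add hki hkj))
  case neg => simp only [(hv _).2.2.1 a]
  case mul =>
    rw [Real.iInf_mul_of_nonneg (le_ciInf fun j => nonneg j b)]
    refine le_ciInf fun i => ?_
    rw [Real.mul_iInf_of_nonneg (nonneg i a)]
    refine le_ciInf fun j => ?_
    obtain ⟨k, hk, hki, hkj⟩ := below_pair (a * b) a b i j
    exact hk.trans (((hv k).2.2.2.1 a b).trans (mul_le_mul hki hkj (nonneg k b) (nonneg i a)))
  case one => simp only [(hv _).2.2.2.2.1, ciInf_const]
  case bdd =>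
    obtain ⟨C, hC, hvC⟩ := (hv i₀).2.2.2.2.2
    exact ⟨C, hC, fun a => (ciInf_le (hbdd a) i₀).trans (hvC a)⟩

theorem exists_isBddSubmultSeminorm_le_of_isChain (c : Set (A → ℝ))
    (hcP : ∀ v ∈ c, IsBddSubmultSeminorm v) (hc : IsChain (· ≤ ·) c) (hne : c.Nonempty) :
    ∃ w, IsBddSubmultSeminorm w ∧ ∀ v ∈ c, w ≤ v := by
  have : Nonempty c := hne.to_subtype
  have hdir : Directed (· ≥ ·) (Subtype.val : c → A → ℝ) :=
    (hc.symm.directedOn (r := (· ≥ ·))).directed_val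
  refine ⟨fun a => ⨅ v : c, (v : A → ℝ) a, .iInf (fun v => hcP v v.2) hdir,
    fun v hv a => ciInf_le ⟨0, ?_⟩ (⟨v, hv⟩ : c)⟩
  rintro _ ⟨u, rfl⟩
  exact (hcP u u.2).1 a

end

theorem exists_minimal_bounded_submultiplicative_seminorm_general
    {A : Type*} [NormedRing A] [NormOneClass A] :
    ∃ v : A → ℝ, IsBddSubmultSeminorm v ∧
      ∀ w : A → ℝ, IsBddSubmultSeminorm w → (∀ a : A, w a ≤ v a) → w = v := by
  obtain ⟨v, hv⟩ :=
    exists_minimal_of_chains_bddBelow₀ {v : A → ℝ | IsBddSubmultSeminorm v}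
      exists_isBddSubmultSeminorm_le_of_isChain
      ⟨_, isBddSubmultSeminorm_norm⟩
  exact ⟨v, hv.prop, fun w hw hwv => hv.eq_of_le hw hwv⟩

/-- The set `P(A)` of bounded submultiplicative seminorms on a Banach ring with `‖1‖ = 1`
has a minimal element with respect to the pointwise order. -/
theorem exists_minimal_bounded_submultiplicative_seminorm
    {A : Type*} [NormedRing A] [CompleteSpace A] [NormOneClass A] :
    ∃ v : A → ℝ, IsBddSubmultSeminorm v ∧
      ∀ w : A → ℝ, IsBddSubmultSeminorm w → (∀ a : A, w a ≤ v a) → w = v :=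
  exists_minimal_bounded_submultiplicative_seminorm_general
end

section
/- Let K be a non-archimedean valuation field, n a natural number, and r : Fin n → ℝ with r(i) > 0 for all i. For f in the monoid algebra of the free monoid on n generators over K (equivalently, the free associative algebra K⟨T₁,…,Tₙ⟩, with f a finitely supported function from words w in the alphabet Fin n to K), define the Gauss norm ‖f‖_r = sup over words w of ‖f(w)‖·∏ r(i), the product taken over all letters i of w (counted with multiplicity). Then the Gauss norm is multiplicative: ‖f·g‖_r = ‖f‖_r·‖g‖_r for all f, g, where the product is the convolution product of the monoid algebra (concatenation of words). -/
/-- The Gauss norm of multiradius `r` on the free associative algebra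
`K⟨T₁,…,Tₙ⟩ = MonoidAlgebra K (FreeMonoid (Fin n))`: the supremum over all words `w`
of `‖f w‖` times the product of `r i` over the letters `i` of `w`. -/
noncomputable def gaussNorm {K : Type*} [NormedField K] {n : ℕ} (r : Fin n → ℝ)
    (f : MonoidAlgebra K (FreeMonoid (Fin n))) : ℝ :=
  ⨆ w : FreeMonoid (Fin n), ‖f.coeff w‖ * ((FreeMonoid.toList w).map r).prod

/-!
The ultrametric inequality makes the Gauss norm submultiplicative. For the reverse inequality,
pick words `u` and `v` attaining the Gauss norms of `f` and `g`, each of maximal length among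
such words. In the coefficient of `u * v` in `f * g`, every other factorisation `a * b = u * v`
has `a` longer than `u` or `b` longer than `v`, so its contribution is strictly smaller than that
of `(u, v)`; in an ultrametric field the dominant term then determines the norm of the sum.
-/

namespace FreeMonoid

variable {α R : Type*}

theorem lift_nonneg [CommSemiring R] [PartialOrder R] [IsOrderedRing R] {r : α → R}
    (hr : ∀ a, 0 ≤ r a) (w : FreeMonoid α) : 0 ≤ lift r w := by
  rw [lift_apply]
  exact List.prod_nonneg (by simpa using fun a _ ↦ hr a)

theorem lift_pos [CommSemiring R] [PartialOrder R] [IsStrictOrderedRing R] {r : α → R}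
    (hr : ∀ a, 0 < r a) (w : FreeMonoid α) : 0 < lift r w := by
  rw [lift_apply]
  exact List.prod_pos (by simpa using fun a _ ↦ hr a)

theorem length_lt_or_length_lt_of_mul_eq_mul {a b u v : FreeMonoid α}
    (h : a * b = u * v) (hne : (a, b) ≠ (u, v)) : u.length < a.length ∨ v.length < b.length := by
  have hlen : a.length + b.length = u.length + v.length := by
    rw [← length_mul, ← length_mul, h]
  rcases lt_trichotomy u.length a.length with hlt | heq | hgt
  · exact .inl hlt
  · obtain ⟨rfl, rfl⟩ := List.append_inj (congrArg toList h) heq.symm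
    exact absurd rfl hne
  · exact .inr (by omega)

end FreeMonoid

theorem IsUltrametricDist.norm_sum_eq_of_forall_ne_norm_lt {M ι : Type*}
    [SeminormedAddCommGroup M] [IsUltrametricDist M] {s : Finset ι} {f : ι → M} {i : ι}
    (hi : i ∈ s) (h : ∀ j ∈ s, j ≠ i → ‖f j‖ < ‖f i‖) : ‖∑ j ∈ s, f j‖ = ‖f i‖ := by
  classical
  rw [← Finset.add_sum_erase s f hi]
  rcases (s.erase i).eq_empty_or_nonempty with hempty | hne
  · simp [hempty]
  obtain ⟨j, hj, hle⟩ := exists_norm_finsetSum_le_of_nonempty hne f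
  have hrest : ‖∑ j ∈ s.erase i, f j‖ < ‖f i‖ :=
    hle.trans_lt (h j (Finset.mem_of_mem_erase hj) (Finset.ne_of_mem_erase hj))
  rw [norm_add_eq_max_of_norm_ne_norm hrest.ne', max_eq_left hrest.le]

theorem MonoidAlgebra.coeff_mul_eq_sum_product {R M : Type*} [Semiring R] [Monoid M]
    [DecidableEq M] (x y : MonoidAlgebra R M) (m : M) :
    (x * y).coeff m = ∑ p ∈ x.coeff.support ×ˢ y.coeff.support,
      if p.1 * p.2 = m then x.coeff p.1 * y.coeff p.2 else 0 := by
  rw [coeff_mul, Finset.sum_product]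
  rfl

section GaussNorm

variable {K : Type*} [NormedField K] {n : ℕ} {r : Fin n → ℝ}

theorem gaussNorm_eq_iSup (r : Fin n → ℝ) (f : MonoidAlgebra K (FreeMonoid (Fin n))) :
    gaussNorm r f = ⨆ w, ‖f.coeff w‖ * FreeMonoid.lift r w := by
  simp only [gaussNorm, FreeMonoid.lift_apply]

theorem bddAbove_range_norm_coeff_mul_lift (r : Fin n → ℝ)
    (f : MonoidAlgebra K (FreeMonoid (Fin n))) :
    BddAbove (Set.range fun w ↦ ‖f.coeff w‖ * FreeMonoid.lift r w) := by
  have hsupp : (Function.support fun w ↦ ‖f.coeff w‖ * FreeMonoid.lift r w).Finite :=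
    f.coeff.support.finite_toSet.subset fun w hw ↦ by
      simpa using Function.support_mul_subset_left _ _ hw
  exact ((hsupp.image _).insert 0).bddAbove.mono (Function.range_subset_insert_image_support _)

theorem le_gaussNorm (r : Fin n → ℝ) (f : MonoidAlgebra K (FreeMonoid (Fin n)))
    (w : FreeMonoid (Fin n)) : ‖f.coeff w‖ * FreeMonoid.lift r w ≤ gaussNorm r f :=
  gaussNorm_eq_iSup r f ▸ le_ciSup (bddAbove_range_norm_coeff_mul_lift r f) w

theorem gaussNorm_le {f : MonoidAlgebra K (FreeMonoid (Fin n))} {C : ℝ}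
    (h : ∀ w, ‖f.coeff w‖ * FreeMonoid.lift r w ≤ C) : gaussNorm r f ≤ C :=
  gaussNorm_eq_iSup r f ▸ ciSup_le h

theorem gaussNorm_nonneg (hr : ∀ i, 0 ≤ r i) (f : MonoidAlgebra K (FreeMonoid (Fin n))) :
    0 ≤ gaussNorm r f :=
  gaussNorm_eq_iSup r f ▸
    Real.iSup_nonneg fun w ↦ mul_nonneg (norm_nonneg _) (FreeMonoid.lift_nonneg hr w)

@[simp]
theorem gaussNorm_zero (r : Fin n → ℝ) :
    gaussNorm r (0 : MonoidAlgebra K (FreeMonoid (Fin n))) = 0 := by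
  simp [gaussNorm]

theorem gaussNorm_mul_le [IsUltrametricDist K] (hr : ∀ i, 0 ≤ r i)
    (f g : MonoidAlgebra K (FreeMonoid (Fin n))) :
    gaussNorm r (f * g) ≤ gaussNorm r f * gaussNorm r g := by
  classical
  refine gaussNorm_le fun x ↦ ?_
  rw [MonoidAlgebra.coeff_mul_eq_sum_product]
  obtain ⟨⟨a, b⟩, -, hab⟩ := IsUltrametricDist.exists_norm_finsetSum_le
    (f.coeff.support ×ˢ g.coeff.support)
    fun p ↦ if p.1 * p.2 = x then f.coeff p.1 * g.coeff p.2 else 0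
  refine (mul_le_mul_of_nonneg_right hab (FreeMonoid.lift_nonneg hr x)).trans ?_
  split_ifs with hx
  · calc ‖f.coeff a * g.coeff b‖ * FreeMonoid.lift r x
          = (‖f.coeff a‖ * FreeMonoid.lift r a) * (‖g.coeff b‖ * FreeMonoid.lift r b) := by
            rw [← hx, map_mul, norm_mul]; ring
      _ ≤ gaussNorm r f * gaussNorm r g :=
            mul_le_mul (le_gaussNorm r f a) (le_gaussNorm r g b)
              (mul_nonneg (norm_nonneg _) (FreeMonoid.lift_nonneg hr b)) (gaussNorm_nonneg hr f)
  · simpa using mul_nonneg (gaussNorm_nonneg hr f) (gaussNorm_nonneg hr g)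

structure IsLongestDominantWord (r : Fin n → ℝ) (f : MonoidAlgebra K (FreeMonoid (Fin n)))
    (u : FreeMonoid (Fin n)) : Prop where
  coeff_ne_zero : f.coeff u ≠ 0
  dominant : ‖f.coeff u‖ * FreeMonoid.lift r u = gaussNorm r f
  lt_of_length_lt : ∀ w, u.length < w.length → ‖f.coeff w‖ * FreeMonoid.lift r w < gaussNorm r f

theorem exists_isLongestDominantWord (hr : ∀ i, 0 < r i)
    {f : MonoidAlgebra K (FreeMonoid (Fin n))} (hf : f ≠ 0) :
    ∃ u, IsLongestDominantWord r f u := by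
  obtain ⟨u, hu, hmax⟩ := f.coeff.support.exists_max_image
    (fun w ↦ toLex (‖f.coeff w‖ * FreeMonoid.lift r w, w.length)) (by simpa using hf)
  have hu0 : f.coeff u ≠ 0 := Finsupp.mem_support_iff.mp hu
  have hlex : ∀ w, ‖f.coeff w‖ * FreeMonoid.lift r w < ‖f.coeff u‖ * FreeMonoid.lift r u ∨
      ‖f.coeff w‖ * FreeMonoid.lift r w = ‖f.coeff u‖ * FreeMonoid.lift r u ∧
        w.length ≤ u.length := by
    intro w
    by_cases hw : f.coeff w = 0
    · left
      simpa [hw] using mul_pos (norm_pos_iff.mpr hu0) (FreeMonoid.lift_pos hr u)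
    · exact Prod.Lex.toLex_le_toLex.mp (hmax w (Finsupp.mem_support_iff.mpr hw))
  have hdom : ‖f.coeff u‖ * FreeMonoid.lift r u = gaussNorm r f :=
    le_antisymm (le_gaussNorm r f u) (gaussNorm_le fun w ↦ (hlex w).elim le_of_lt (·.1.le))
  exact ⟨u, hu0, hdom, fun w hw ↦ hdom ▸ (hlex w).resolve_right fun h ↦ hw.not_ge h.2⟩

namespace IsLongestDominantWord

variable {f g : MonoidAlgebra K (FreeMonoid (Fin n))} {u v : FreeMonoid (Fin n)}

theorem gaussNorm_pos (hr : ∀ i, 0 < r i) (hu : IsLongestDominantWord r f u) :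
    0 < gaussNorm r f :=
  hu.dominant ▸ mul_pos (norm_pos_iff.mpr hu.coeff_ne_zero) (FreeMonoid.lift_pos hr u)

theorem norm_coeff_mul_coeff_lt (hr : ∀ i, 0 < r i) (hu : IsLongestDominantWord r f u)
    (hv : IsLongestDominantWord r g v) {a b : FreeMonoid (Fin n)} (hab : a * b = u * v)
    (hne : (a, b) ≠ (u, v)) : ‖f.coeff a * g.coeff b‖ < ‖f.coeff u * g.coeff v‖ := by
  have hw : 0 < FreeMonoid.lift r (u * v) := FreeMonoid.lift_pos hr _
  refine lt_of_mul_lt_mul_right ?_ hw.le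
  have hnf := mul_nonneg (norm_nonneg (f.coeff a)) (FreeMonoid.lift_nonneg (fun i ↦ (hr i).le) a)
  have hng := mul_nonneg (norm_nonneg (g.coeff b)) (FreeMonoid.lift_nonneg (fun i ↦ (hr i).le) b)
  calc ‖f.coeff a * g.coeff b‖ * FreeMonoid.lift r (u * v)
      = (‖f.coeff a‖ * FreeMonoid.lift r a) * (‖g.coeff b‖ * FreeMonoid.lift r b) := by
        rw [← hab, map_mul, norm_mul]; ring
    _ < gaussNorm r f * gaussNorm r g := by
        rcases FreeMonoid.length_lt_or_length_lt_of_mul_eq_mul hab hne with ha | hb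
        · exact mul_lt_mul_of_lt_of_le_of_nonneg_of_pos (hu.lt_of_length_lt a ha)
            (le_gaussNorm r g b) hnf (hv.gaussNorm_pos hr)
        · exact mul_lt_mul_of_le_of_lt_of_nonneg_of_pos (le_gaussNorm r f a)
            (hv.lt_of_length_lt b hb) hng (hu.gaussNorm_pos hr)
    _ = ‖f.coeff u * g.coeff v‖ * FreeMonoid.lift r (u * v) := by
        rw [← hu.dominant, ← hv.dominant, map_mul, norm_mul]; ring

theorem norm_coeff_mul_mul [IsUltrametricDist K] (hr : ∀ i, 0 < r i)
    (hu : IsLongestDominantWord r f u) (hv : IsLongestDominantWord r g v) :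
    ‖(f * g).coeff (u * v)‖ = ‖f.coeff u * g.coeff v‖ := by
  classical
  rw [MonoidAlgebra.coeff_mul_eq_sum_product]
  refine (IsUltrametricDist.norm_sum_eq_of_forall_ne_norm_lt (i := (u, v))
    (by simp [hu.coeff_ne_zero, hv.coeff_ne_zero]) ?_).trans (by simp)
  rintro ⟨a, b⟩ - hne
  rw [if_pos rfl]
  split_ifs with hab
  · exact hu.norm_coeff_mul_coeff_lt hr hv hab hne
  · simpa using norm_pos_iff.mpr (mul_ne_zero hu.coeff_ne_zero hv.coeff_ne_zero)

end IsLongestDominantWord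

theorem le_gaussNorm_mul [IsUltrametricDist K] (hr : ∀ i, 0 < r i)
    (f g : MonoidAlgebra K (FreeMonoid (Fin n))) :
    gaussNorm r f * gaussNorm r g ≤ gaussNorm r (f * g) := by
  rcases eq_or_ne f 0 with rfl | hf
  · simp
  rcases eq_or_ne g 0 with rfl | hg
  · simp
  obtain ⟨u, hu⟩ := exists_isLongestDominantWord hr hf
  obtain ⟨v, hv⟩ := exists_isLongestDominantWord hr hg
  calc gaussNorm r f * gaussNorm r g
      = ‖(f * g).coeff (u * v)‖ * FreeMonoid.lift r (u * v) := by
        rw [hu.norm_coeff_mul_mul hr hv, ← hu.dominant, ← hv.dominant, map_mul, norm_mul]; ring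
    _ ≤ gaussNorm r (f * g) := le_gaussNorm r (f * g) (u * v)

end GaussNorm

/-- The Gauss norm on the free associative polynomial algebra over a non-archimedean
valuation field is multiplicative. -/
theorem gaussNorm_mul {K : Type*} [NormedField K] [IsUltrametricDist K] {n : ℕ}
    (r : Fin n → ℝ) (hr : ∀ i, 0 < r i)
    (f g : MonoidAlgebra K (FreeMonoid (Fin n))) :
    gaussNorm r (f * g) = gaussNorm r f * gaussNorm r g :=
  le_antisymm (gaussNorm_mul_le (fun i ↦ (hr i).le) f g) (le_gaussNorm_mul hr f g)
end

section
/- Let K be a non-archimedean valuation field, q ∈ Kˣ a unit with ‖q‖ = 1, n a natural number, and r : Fin n → ℝ with r(i) > 0 for all i. Represent elements of the quantum Tate algebra K{T₁,…,Tₙ}_{q,r} by their coefficient functions a : (Fin n →₀ ℕ) → K on the standard monomials T^l = T₁^{l₁}⋯Tₙ^{lₙ}, subject to the decay condition that ‖a(l)‖·∏ᵢ r(i)^{l(i)} tends to 0 along the cofinite filter on Fin n →₀ ℕ. The product of two such elements, written in the standard monomial basis of the algebra with relations TᵢTⱼ = q·TⱼTᵢ for i < j, has coefficients c(k) = Σ_{l+m=k}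 q^{−e(l,m)}·a(l)·b(m), where e(l,m) = Σ_{(i,j), j<i} l(i)·m(j) and the (finite) sum is over all pairs (l,m) of multi-indices with l+m=k. Then: (i) if a and b satisfy the decay condition, so does c; and (ii) the Gauss norm is multiplicative: ⨆_k ‖c(k)‖·∏ᵢ r(i)^{k(i)} = (⨆_l ‖a(l)‖·∏ᵢ r(i)^{l(i)})·(⨆_m ‖b(m)‖·∏ᵢ r(i)^{m(i)}). -/
/-!
Since `‖q‖ = 1`, every twisting factor `q ^ (-e(l, m))` has norm one, so the twist plays no role
and the argument is Gauss's lemma. Write `‖a‖ᵣ(l) = ‖a l‖ rˡ`. The ultrametric inequality bounds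
`‖c‖ᵣ(k)` by `‖a‖ᵣ(l) ‖b‖ᵣ(m)` for some `l + m = k`; the pair `(l, m)` determines `k`, which gives
the decay of `c` and the inequality `≤` for the Gauss norms. For `≥`, let `l₀` and `m₀` be the
lexicographically smallest indices where `‖a‖ᵣ` and `‖b‖ᵣ` attain their maxima (finitely many
indices do, by the decay). Every other pair with `l + m = l₀ + m₀` has a factor strictly below
its maximum, so the term `(l₀, m₀)` strictly dominates the sum defining `c (l₀ + m₀)` and
`‖c‖ᵣ(l₀ + m₀)` is the product of the two maxima.
-/

open Filter

/-- The commutation exponent: `e(l,m) = ∑_{(i,j), j < i} l i * m j`. -/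
def commExponent {n : ℕ} (l m : Fin n →₀ ℕ) : ℕ :=
  ∑ i : Fin n, ∑ j : Fin n, if j < i then l i * m j else 0

open Finset.HasAntidiagonal

section DecayAlongCofinite

variable {ι : Type*} {f : ι → ℝ}

lemma finite_setOf_le_of_tendsto_zero (hf : Tendsto f cofinite (nhds 0)) {ε : ℝ} (hε : 0 < ε) :
    {i | ε ≤ f i}.Finite := by
  simpa only [not_lt] using eventually_cofinite.mp (hf.eventually (gt_mem_nhds hε))

lemma exists_forall_le_of_tendsto_zero (hf : Tendsto f cofinite (nhds 0)) {i₁ : ι}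
    (hi₁ : 0 < f i₁) : ∃ i₀, ∀ i, f i ≤ f i₀ := by
  obtain ⟨i₀, hi₀, hmax⟩ := Set.exists_max_image _ f (finite_setOf_le_of_tendsto_zero hf hi₁)
    ⟨i₁, le_refl (f i₁)⟩
  refine ⟨i₀, fun i => ?_⟩
  by_cases hi : f i₁ ≤ f i
  · exact hmax i hi
  · exact (not_le.mp hi).le.trans hi₀

lemma exists_forall_norm_le_of_tendsto_zero {R : Type*} [SeminormedAddCommGroup R] {h : ι → R}
    (hh : Tendsto h cofinite (nhds 0)) : ∃ C, ∀ i, ‖h i‖ ≤ C := by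
  obtain ⟨C, hC⟩ := hh.norm.bddAbove_range_of_cofinite
  exact ⟨C, fun i => hC ⟨i, rfl⟩⟩

end DecayAlongCofinite

lemma tendsto_mul_prod_cofinite {α β R : Type*} [NonUnitalSeminormedRing R] {f : α → R}
    {g : β → R} (hf : Tendsto f cofinite (nhds 0)) (hg : Tendsto g cofinite (nhds 0)) :
    Tendsto (fun p : α × β => f p.1 * g p.2) cofinite (nhds 0) := by
  obtain ⟨C, hC⟩ := exists_forall_norm_le_of_tendsto_zero hf
  obtain ⟨D, hD⟩ := exists_forall_norm_le_of_tendsto_zero hg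
  rw [← coprod_cofinite, Filter.coprod, tendsto_sup]
  exact ⟨(hf.comp tendsto_comap).zero_mul_isBoundedUnder_le
      (isBoundedUnder_of ⟨D, fun p => hD p.2⟩),
    isBoundedUnder_le_mul_tendsto_zero (isBoundedUnder_of ⟨C, fun p => hC p.1⟩)
      (hg.comp tendsto_comap)⟩

lemma tendsto_zero_of_le_mul_antidiagonal {M : Type*} [AddCommMonoid M]
    [Finset.HasAntidiagonal M]
    {f g h : M → ℝ} (hf : Tendsto f cofinite (nhds 0)) (hg : Tendsto g cofinite (nhds 0))
    (hh₀ : ∀ k, 0 ≤ h k) (hh : ∀ k, ∃ p ∈ antidiagonal k, h k ≤ f p.1 * g p.2) :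
    Tendsto h cofinite (nhds 0) := by
  choose σ hσ hle using hh
  have hσinj : Function.Injective σ := fun k k' hkk' => by
    rw [← mem_antidiagonal.mp (hσ k), ← mem_antidiagonal.mp (hσ k'), hkk']
  exact squeeze_zero hh₀ hle ((tendsto_mul_prod_cofinite hf hg).comp hσinj.tendsto_cofinite)

lemma IsUltrametricDist.norm_sum_eq_of_forall_ne_lt {ι M : Type*} [SeminormedAddCommGroup M]
    [IsUltrametricDist M] [DecidableEq ι] {s : Finset ι} {f : ι → M} {i : ι} (hi : i ∈ s)
    (h : ∀ j ∈ s, j ≠ i → ‖f j‖ < ‖f i‖) : ‖∑ j ∈ s, f j‖ = ‖f i‖ := by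
  rw [← Finset.add_sum_erase s f hi]
  rcases (s.erase i).eq_empty_or_nonempty with hempty | hne
  · rw [hempty, Finset.sum_empty, add_zero]
  obtain ⟨j, hj, hle⟩ := exists_norm_finsetSum_le_of_nonempty hne f
  have hlt := hle.trans_lt (h j (Finset.mem_of_mem_erase hj) (Finset.ne_of_mem_erase hj))
  rw [norm_add_eq_max_of_norm_ne_norm hlt.ne', max_eq_left hlt.le]

lemma MonomialOrder.exists_min_maximizer {σ : Type*} (ord : MonomialOrder σ)
    {f : (σ →₀ ℕ) → ℝ} (hf : Tendsto f cofinite (nhds 0)) {l₁ : σ →₀ ℕ} (hl₁ : 0 < f l₁) :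
    ∃ l₀, (∀ l, f l ≤ f l₀) ∧ ∀ l, f l₀ ≤ f l → ord.toSyn l₀ ≤ ord.toSyn l := by
  obtain ⟨i₀, hi₀⟩ := exists_forall_le_of_tendsto_zero hf hl₁
  obtain ⟨l₀, hl₀, hmin⟩ := Set.exists_min_image _ ord.toSyn
    (finite_setOf_le_of_tendsto_zero hf (hl₁.trans_le (hi₀ l₁))) ⟨i₀, le_refl (f i₀)⟩
  exact ⟨l₀, fun l => (hi₀ l).trans hl₀, fun l hl => hmin l (hl₀.trans hl)⟩

lemma MonomialOrder.exists_max_pair_mul_lt {σ : Type*} (ord : MonomialOrder σ)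
    {f g : (σ →₀ ℕ) → ℝ} (hf₀ : ∀ l, 0 ≤ f l) (hg₀ : ∀ m, 0 ≤ g m)
    (hf : Tendsto f cofinite (nhds 0)) (hg : Tendsto g cofinite (nhds 0))
    {l₁ m₁ : σ →₀ ℕ} (hl₁ : 0 < f l₁) (hm₁ : 0 < g m₁) :
    ∃ l₀ m₀, (∀ l, f l ≤ f l₀) ∧ (∀ m, g m ≤ g m₀) ∧
      ∀ l m, l + m = l₀ + m₀ → (l, m) ≠ (l₀, m₀) → f l * g m < f l₀ * g m₀ := by
  obtain ⟨l₀, hl₀, hl₀min⟩ := ord.exists_min_maximizer hf hl₁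
  obtain ⟨m₀, hm₀, hm₀min⟩ := ord.exists_min_maximizer hg hm₁
  refine ⟨l₀, m₀, hl₀, hm₀, fun l m hsum hne => ?_⟩
  have hsyn : ord.toSyn l + ord.toSyn m = ord.toSyn l₀ + ord.toSyn m₀ := by
    rw [← map_add, ← map_add, hsum]
  have hl : l ≠ l₀ := fun h => hne (Prod.ext h (add_left_cancel (h ▸ hsum)))
  rcases (ord.toSyn.injective.ne hl).lt_or_gt with hlt | hgt
  · have hfl : f l < f l₀ := (hl₀ l).lt_of_not_ge fun h => (hl₀min l h).not_gt hlt
    calc f l * g m ≤ f l * g m₀ := mul_le_mul_of_nonneg_left (hm₀ m) (hf₀ l)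
      _ < f l₀ * g m₀ := mul_lt_mul_of_pos_right hfl (hm₁.trans_le (hm₀ m₁))
  · have hlt : ord.toSyn m < ord.toSyn m₀ :=
      lt_of_add_lt_add_left (hsyn ▸ add_lt_add_left hgt (ord.toSyn m))
    have hgm : g m < g m₀ := (hm₀ m).lt_of_not_ge fun h => (hm₀min m h).not_gt hlt
    calc f l * g m ≤ f l₀ * g m := mul_le_mul_of_nonneg_right (hl₀ l) (hg₀ m)
      _ < f l₀ * g m₀ := mul_lt_mul_of_pos_left hgm (hl₁.trans_le (hl₀ l₁))

section TwistedConvolution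

variable {K M : Type*} [NormedField K] [AddCommMonoid M] {w : M → ℝ} {u : M × M → K}
  {a b : M → K}

lemma norm_mul_mul_mul_weight (hw : ∀ l m, w (l + m) = w l * w m) (hu : ∀ p, ‖u p‖ = 1)
    (p : M × M) :
    ‖u p * a p.1 * b p.2‖ * w (p.1 + p.2) = ‖a p.1‖ * w p.1 * (‖b p.2‖ * w p.2) := by
  rw [norm_mul, norm_mul, hu, one_mul, hw]
  ring

variable [Finset.HasAntidiagonal M]

def twistedConv (u : M × M → K) (a b : M → K) (k : M) : K :=
  ∑ p ∈ antidiagonal k, u p * a p.1 * b p.2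

variable [IsUltrametricDist K]

lemma exists_mem_antidiagonal_norm_twistedConv_mul_weight_le (hw₀ : ∀ k, 0 ≤ w k)
    (hw : ∀ l m, w (l + m) = w l * w m) (hu : ∀ p, ‖u p‖ = 1) (k : M) :
    ∃ p ∈ antidiagonal k,
      ‖twistedConv u a b k‖ * w k ≤ ‖a p.1‖ * w p.1 * (‖b p.2‖ * w p.2) := by
  obtain ⟨p, hp, hle⟩ := IsUltrametricDist.exists_norm_finsetSum_le_of_nonempty
    ⟨(0, k), mem_antidiagonal.mpr (zero_add k)⟩ fun p => u p * a p.1 * b p.2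
  refine ⟨p, hp, ?_⟩
  rw [← norm_mul_mul_mul_weight hw hu, mem_antidiagonal.mp hp]
  exact mul_le_mul_of_nonneg_right hle (hw₀ k)

lemma norm_twistedConv_mul_weight_eq_of_dominant (hw₀ : ∀ k, 0 ≤ w k)
    (hw : ∀ l m, w (l + m) = w l * w m) (hu : ∀ p, ‖u p‖ = 1) {l₀ m₀ : M}
    (hdom : ∀ l m, l + m = l₀ + m₀ → (l, m) ≠ (l₀, m₀) →
      ‖a l‖ * w l * (‖b m‖ * w m) < ‖a l₀‖ * w l₀ * (‖b m₀‖ * w m₀)) :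
    ‖twistedConv u a b (l₀ + m₀)‖ * w (l₀ + m₀) = ‖a l₀‖ * w l₀ * (‖b m₀‖ * w m₀) := by
  classical
  have hterm : ∀ p ∈ antidiagonal (l₀ + m₀),
      ‖u p * a p.1 * b p.2‖ * w (l₀ + m₀) = ‖a p.1‖ * w p.1 * (‖b p.2‖ * w p.2) :=
    fun p hp => by rw [← mem_antidiagonal.mp hp, norm_mul_mul_mul_weight hw hu]
  have hmem : (l₀, m₀) ∈ antidiagonal (l₀ + m₀) := mem_antidiagonal.mpr rfl
  have hlt : ∀ p ∈ antidiagonal (l₀ + m₀), p ≠ (l₀, m₀) →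
      ‖u p * a p.1 * b p.2‖ < ‖u (l₀, m₀) * a l₀ * b m₀‖ := fun p hp hne =>
    lt_of_mul_lt_mul_right (by
      rw [hterm p hp, hterm _ hmem]
      exact hdom _ _ (mem_antidiagonal.mp hp) hne) (hw₀ _)
  rw [twistedConv, IsUltrametricDist.norm_sum_eq_of_forall_ne_lt hmem hlt, hterm _ hmem]

lemma tendsto_norm_twistedConv_mul_weight (hw₀ : ∀ k, 0 ≤ w k)
    (hw : ∀ l m, w (l + m) = w l * w m) (hu : ∀ p, ‖u p‖ = 1)
    (ha : Tendsto (fun l => ‖a l‖ * w l) cofinite (nhds 0))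
    (hb : Tendsto (fun m => ‖b m‖ * w m) cofinite (nhds 0)) :
    Tendsto (fun k => ‖twistedConv u a b k‖ * w k) cofinite (nhds 0) :=
  tendsto_zero_of_le_mul_antidiagonal ha hb (fun k => mul_nonneg (norm_nonneg _) (hw₀ k))
    (exists_mem_antidiagonal_norm_twistedConv_mul_weight_le hw₀ hw hu)

end TwistedConvolution

theorem iSup_norm_twistedConv_mul_weight {K σ : Type*} [NormedField K] [IsUltrametricDist K]
    [DecidableEq σ] (ord : MonomialOrder σ) {w : (σ →₀ ℕ) → ℝ}
    {u : (σ →₀ ℕ) × (σ →₀ ℕ) → K} {a b : (σ →₀ ℕ) → K} (hw₀ : ∀ k, 0 ≤ w k)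
    (hw : ∀ l m, w (l + m) = w l * w m) (hu : ∀ p, ‖u p‖ = 1)
    (ha : Tendsto (fun l => ‖a l‖ * w l) cofinite (nhds 0))
    (hb : Tendsto (fun m => ‖b m‖ * w m) cofinite (nhds 0)) :
    ⨆ k, ‖twistedConv u a b k‖ * w k = (⨆ l, ‖a l‖ * w l) * ⨆ m, ‖b m‖ * w m := by
  have hnonneg (x : (σ →₀ ℕ) → K) (l : σ →₀ ℕ) : 0 ≤ ‖x l‖ * w l :=
    mul_nonneg (norm_nonneg _) (hw₀ l)
  have hA₀ := Real.iSup_nonneg (hnonneg a)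
  have hC₀ := Real.iSup_nonneg (hnonneg (twistedConv u a b))
  apply le_antisymm
  · refine ciSup_le fun k => ?_
    obtain ⟨p, -, hle⟩ := exists_mem_antidiagonal_norm_twistedConv_mul_weight_le hw₀ hw hu k
    exact hle.trans (mul_le_mul (le_ciSup ha.bddAbove_range_of_cofinite p.1)
      (le_ciSup hb.bddAbove_range_of_cofinite p.2) (hnonneg b p.2) hA₀)
  rcases hA₀.eq_or_lt with hA | hA
  · rwa [← hA, zero_mul]
  rcases (Real.iSup_nonneg (hnonneg b)).eq_or_lt with hB | hB
  · rwa [← hB, mul_zero]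
  obtain ⟨l₁, hl₁⟩ := exists_lt_of_lt_ciSup hA
  obtain ⟨m₁, hm₁⟩ := exists_lt_of_lt_ciSup hB
  obtain ⟨l₀, m₀, hl₀, hm₀, hdom⟩ :=
    ord.exists_max_pair_mul_lt (hnonneg a) (hnonneg b) ha hb hl₁ hm₁
  rw [ciSup_eq_of_forall_le_of_forall_lt_exists_gt hl₀ fun _ h => ⟨l₀, h⟩,
    ciSup_eq_of_forall_le_of_forall_lt_exists_gt hm₀ fun _ h => ⟨m₀, h⟩,
    ← norm_twistedConv_mul_weight_eq_of_dominant hw₀ hw hu hdom]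
  exact le_ciSup (tendsto_norm_twistedConv_mul_weight hw₀ hw hu ha hb).bddAbove_range_of_cofinite
    (l₀ + m₀)

/-- Product coefficients and multiplicativity of the Gauss norm in the quantum Tate
algebra `K{T₁,…,Tₙ}_{q,r}` (variables with `TᵢTⱼ = q TⱼTᵢ` for `i < j`): if the
coefficient functions `a, b` satisfy the decay condition then so does their product
`c(k) = ∑_{l+m=k} q^{-e(l,m)} a(l) b(m)`, and the Gauss norm is multiplicative. -/
theorem quantumTate_gaussNorm_mul {K : Type*} [NormedField K] [IsUltrametricDist K]
    {n : ℕ} (q : Kˣ) (hq : ‖(q : K)‖ = 1) (r : Fin n → ℝ) (hr : ∀ i, 0 < r i)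
    (a b : (Fin n →₀ ℕ) → K)
    (ha : Tendsto (fun l : Fin n →₀ ℕ => ‖a l‖ * ∏ i, r i ^ l i) cofinite (nhds 0))
    (hb : Tendsto (fun m : Fin n →₀ ℕ => ‖b m‖ * ∏ i, r i ^ m i) cofinite (nhds 0))
    (c : (Fin n →₀ ℕ) → K)
    (hc : ∀ k : Fin n →₀ ℕ, c k =
      ∑ p ∈ Finset.HasAntidiagonal.antidiagonal k,
        ((q ^ (-(commExponent p.1 p.2 : ℤ)) : Kˣ) : K) * a p.1 * b p.2) :
    -- (i) the product coefficients satisfy the decay condition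
    Tendsto (fun k : Fin n →₀ ℕ => ‖c k‖ * ∏ i, r i ^ k i) cofinite (nhds 0) ∧
    -- (ii) the Gauss norm is multiplicative
    (⨆ k : Fin n →₀ ℕ, ‖c k‖ * ∏ i, r i ^ k i) =
      (⨆ l : Fin n →₀ ℕ, ‖a l‖ * ∏ i, r i ^ l i) *
        (⨆ m : Fin n →₀ ℕ, ‖b m‖ * ∏ i, r i ^ m i) := by
  have hw₀ (k : Fin n →₀ ℕ) : 0 ≤ ∏ i, r i ^ k i :=
    Finset.prod_nonneg fun i _ => pow_nonneg (hr i).le _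
  have hw (l m : Fin n →₀ ℕ) : ∏ i, r i ^ (l + m) i = (∏ i, r i ^ l i) * ∏ i, r i ^ m i := by
    simp only [Finsupp.add_apply, pow_add, Finset.prod_mul_distrib]
  have hu (p : (Fin n →₀ ℕ) × (Fin n →₀ ℕ)) :
      ‖((q ^ (-(commExponent p.1 p.2 : ℤ)) : Kˣ) : K)‖ = 1 := by
    rw [Units.val_zpow_eq_zpow_val, norm_zpow, hq, one_zpow]
  obtain rfl : c = twistedConv _ a b := funext hc
  exact ⟨tendsto_norm_twistedConv_mul_weight hw₀ hw hu ha hb,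
    iSup_norm_twistedConv_mul_weight MonomialOrder.lex hw₀ hw hu ha hb⟩
end

section
/- Let K be a complete non-archimedean valuation field, q ∈ Kˣ a unit with ‖q‖ = 1, d a natural number, φ : (Fin d → ℤ) → (Fin d → ℤ) → ℤ a skew-symmetric biadditive form, and r : Fin d → ℝ with r(i) > 0 for all i. Let a, b : (Fin d → ℤ) → K satisfy the decay condition that ‖a(λ)‖·∏ᵢ r(i)^{λ(i)} → 0 and ‖b(λ)‖·∏ᵢ r(i)^{λ(i)} → 0 along the cofinite filter on Fin d → ℤ (these are coefficient functions of analytic functions on the quantum torus of multiradius r). Then: (i) for every κ, the family λ ↦ q^{φ(λ,κ−λ)}·a(λ)·b(κ−λ) is summable in K; (ii) the twisted convolution c(κ) = Σ'_λ q^{φ(λ,κ−λ)}·a(λ)·b(κ−λ) again satisfies the decay condition; (iii) the norm ν_r(f) = ⨆_λ ‖f(λ)‖·∏ᵢ r(i)^{λ(i)} is submultiplicative on these products: ν_r(c) ≤ ν_r(a)·ν_r(b). In other words, the analytic functions on the quantum torus of multiradius r form a Banach K-algebra. -/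
/-!
Since `‖q‖ = 1` and the weight `w λ = ∏ᵢ rᵢ ^ λᵢ` is multiplicative, each term of the twisted
convolution satisfies `‖term‖ · w κ = f λ · g (κ - λ)` with `f = ‖a‖ w` and `g = ‖b‖ w`, so the
twist is invisible to all estimates. As `f` and `g` tend to `0`, so does `f p.1 · g p.2` along the
cofinite filter on pairs. For fixed `κ` this gives summability; and since only finitely many
`κ = p.1 + p.2` carry a large term, the ultrametric bound `‖∑ xᵢ‖ ≤ sup ‖xᵢ‖` gives the decay of
the product. Bounding `f` and `g` by their suprema gives submultiplicativity.
-/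

open Filter Topology Set

theorem tendsto_mul_cofinite_prod {α β R : Type*}
    [NonUnitalSeminormedRing R] {f : α → R} {g : β → R} (hf : Tendsto f cofinite (𝓝 0))
    (hg : Tendsto g cofinite (𝓝 0)) :
    Tendsto (fun p : α × β => f p.1 * g p.2) cofinite (𝓝 0) := by
  rw [← coprod_cofinite, Filter.coprod, tendsto_sup]
  constructor
  · exact (hf.comp tendsto_comap).zero_mul_isBoundedUnder_le
      (hg.norm.bddAbove_range_of_cofinite.mono
        (range_comp_subset_range _ _)).isBoundedUnder_of_range
  · exact isBoundedUnder_le_mul_tendsto_zero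
      (hf.norm.bddAbove_range_of_cofinite.mono
        (range_comp_subset_range _ _)).isBoundedUnder_of_range
      (hg.comp tendsto_comap)

theorem prod_zpow_add {ι G : Type*} [Fintype ι] [CommGroupWithZero G] {r : ι → G}
    (hr : ∀ i, r i ≠ 0) (l m : ι → ℤ) :
    ∏ i, r i ^ (l + m) i = (∏ i, r i ^ l i) * ∏ i, r i ^ m i := by
  simp only [Pi.add_apply, zpow_add₀ (hr _), Finset.prod_mul_distrib]

section SupMulConv

variable {M : Type*} [AddCommGroup M] {f g : M → ℝ}

noncomputable def supMulConv (f g : M → ℝ) (κ : M) : ℝ :=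
  ⨆ l, f l * g (κ - l)

theorem tendsto_mul_comp_sub_cofinite (hf : Tendsto f cofinite (𝓝 0))
    (hg : Tendsto g cofinite (𝓝 0)) (κ : M) :
    Tendsto (fun l => f l * g (κ - l)) cofinite (𝓝 0) :=
  (tendsto_mul_cofinite_prod hf hg).comp <|
    Function.Injective.tendsto_cofinite (f := fun l => (l, κ - l))
      fun _ _ h => congrArg Prod.fst h

theorem le_supMulConv (hf : Tendsto f cofinite (𝓝 0)) (hg : Tendsto g cofinite (𝓝 0))
    (κ l : M) : f l * g (κ - l) ≤ supMulConv f g κ :=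
  le_ciSup (tendsto_mul_comp_sub_cofinite hf hg κ).bddAbove_range_of_cofinite l

theorem eventually_cofinite_forall_mul_comp_sub_lt (hf : Tendsto f cofinite (𝓝 0))
    (hg : Tendsto g cofinite (𝓝 0)) {ε : ℝ} (hε : 0 < ε) :
    ∀ᶠ κ in cofinite, ∀ l, f l * g (κ - l) < ε := by
  have hlarge : {p : M × M | ¬ f p.1 * g p.2 < ε}.Finite :=
    eventually_cofinite.1 ((tendsto_order.1 (tendsto_mul_cofinite_prod hf hg)).2 ε hε)
  refine eventually_cofinite.2 ((hlarge.image fun p => p.1 + p.2).subset fun κ hκ => ?_)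
  obtain ⟨l, hl⟩ := not_forall.1 hκ
  exact ⟨(l, κ - l), hl, add_sub_cancel l κ⟩

theorem tendsto_supMulConv_cofinite (hf0 : ∀ l, 0 ≤ f l) (hg0 : ∀ l, 0 ≤ g l)
    (hf : Tendsto f cofinite (𝓝 0)) (hg : Tendsto g cofinite (𝓝 0)) :
    Tendsto (supMulConv f g) cofinite (𝓝 0) := by
  refine tendsto_order.2 ⟨fun a ha => Eventually.of_forall fun κ => ?_, fun ε hε => ?_⟩
  · exact ha.trans_le (Real.iSup_nonneg fun l => mul_nonneg (hf0 l) (hg0 _))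
  · filter_upwards [eventually_cofinite_forall_mul_comp_sub_lt hf hg (half_pos hε)] with κ hκ
    exact (Real.iSup_le (fun l => (hκ l).le) (half_pos hε).le).trans_lt (half_lt_self hε)

theorem supMulConv_le_iSup_mul_iSup (hf0 : ∀ l, 0 ≤ f l) (hg0 : ∀ l, 0 ≤ g l)
    (hf : Tendsto f cofinite (𝓝 0)) (hg : Tendsto g cofinite (𝓝 0)) (κ : M) :
    supMulConv f g κ ≤ (⨆ l, f l) * ⨆ m, g m :=
  Real.iSup_le
    (fun l => mul_le_mul (le_ciSup hf.bddAbove_range_of_cofinite l)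
      (le_ciSup hg.bddAbove_range_of_cofinite (κ - l)) (hg0 _) (Real.iSup_nonneg hf0))
    (mul_nonneg (Real.iSup_nonneg hf0) (Real.iSup_nonneg hg0))

variable {K : Type*} [NormedField K] [IsUltrametricDist K] {t : M → K} {c : ℝ} {κ : M}

theorem summable_of_norm_mul_le_mul_comp_sub [CompleteSpace K]
    (hf : Tendsto f cofinite (𝓝 0)) (hg : Tendsto g cofinite (𝓝 0)) (hc : 0 < c)
    (ht : ∀ l, ‖t l‖ * c ≤ f l * g (κ - l)) : Summable t := by
  refine NonarchimedeanAddGroup.summable_of_tendsto_cofinite_zero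
    (tendsto_zero_iff_norm_tendsto_zero.2 ?_)
  refine squeeze_zero (fun _ => norm_nonneg _) (fun l => (le_div_iff₀ hc).2 (ht l)) ?_
  simpa using (tendsto_mul_comp_sub_cofinite hf hg κ).div_const c

theorem norm_tsum_mul_le_supMulConv (hf : Tendsto f cofinite (𝓝 0))
    (hg : Tendsto g cofinite (𝓝 0)) (hc : 0 < c) (ht : ∀ l, ‖t l‖ * c ≤ f l * g (κ - l)) :
    ‖∑' l, t l‖ * c ≤ supMulConv f g κ := by
  rw [← le_div_iff₀ hc]
  exact IsUltrametricDist.norm_tsum_le_of_forall_le fun l =>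
    (le_div_iff₀ hc).2 ((ht l).trans (le_supMulConv hf hg κ l))

end SupMulConv

theorem quantumTorus_analytic_banachAlgebra_general {K : Type*} [NormedField K]
    [IsUltrametricDist K] [CompleteSpace K] {d : ℕ} (q : Kˣ) (hq : ‖(q : K)‖ = 1)
    (φ : (Fin d → ℤ) → (Fin d → ℤ) → ℤ)
    (r : Fin d → ℝ) (hr : ∀ i, 0 < r i)
    (a b : (Fin d → ℤ) → K)
    (ha : Tendsto (fun lm : Fin d → ℤ => ‖a lm‖ * ∏ i, r i ^ lm i) cofinite (nhds 0))
    (hb : Tendsto (fun mu : Fin d → ℤ => ‖b mu‖ * ∏ i, r i ^ mu i) cofinite (nhds 0)) :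
    -- (i) summability of the twisted convolution
    (∀ κ : Fin d → ℤ,
      Summable fun lm : Fin d → ℤ => ((q ^ φ lm (κ - lm) : Kˣ) : K) * a lm * b (κ - lm)) ∧
    -- (ii) the product again satisfies the decay condition
    Tendsto
      (fun κ : Fin d → ℤ =>
        ‖∑' lm : Fin d → ℤ, ((q ^ φ lm (κ - lm) : Kˣ) : K) * a lm * b (κ - lm)‖ *
          ∏ i, r i ^ κ i)
      cofinite (nhds 0) ∧
    -- (iii) the norm `ν_r` is submultiplicative
    (⨆ κ : Fin d → ℤ,
        ‖∑' lm : Fin d → ℤ, ((q ^ φ lm (κ - lm) : Kˣ) : K) * a lm * b (κ - lm)‖ *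
          ∏ i, r i ^ κ i) ≤
      (⨆ lm : Fin d → ℤ, ‖a lm‖ * ∏ i, r i ^ lm i) *
        (⨆ mu : Fin d → ℤ, ‖b mu‖ * ∏ i, r i ^ mu i) := by
  have hw : ∀ l : Fin d → ℤ, 0 < ∏ i, r i ^ l i :=
    fun l => Finset.prod_pos fun i _ => zpow_pos (hr i) _
  have hweighted : ∀ (c : (Fin d → ℤ) → K) l, 0 ≤ ‖c l‖ * ∏ i, r i ^ l i :=
    fun c l => mul_nonneg (norm_nonneg _) (hw l).le
  have hterm : ∀ κ l : Fin d → ℤ,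
      ‖((q ^ φ l (κ - l) : Kˣ) : K) * a l * b (κ - l)‖ * ∏ i, r i ^ κ i ≤
        (‖a l‖ * ∏ i, r i ^ l i) * (‖b (κ - l)‖ * ∏ i, r i ^ (κ - l) i) := by
    intro κ l
    rw [norm_mul, norm_mul, Units.val_zpow_eq_zpow_val, norm_zpow, hq, one_zpow,
      ← add_sub_cancel l κ, prod_zpow_add fun i => (hr i).ne', add_sub_cancel_left]
    exact le_of_eq (by ring)
  have hbound := fun κ => norm_tsum_mul_le_supMulConv ha hb (hw κ) (hterm κ)
  refine ⟨fun κ => summable_of_norm_mul_le_mul_comp_sub ha hb (hw κ) (hterm κ), ?_, ?_⟩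
  · exact squeeze_zero (fun κ => mul_nonneg (norm_nonneg _) (hw κ).le) hbound
      (tendsto_supMulConv_cofinite (hweighted a) (hweighted b) ha hb)
  · exact ciSup_le fun κ => (hbound κ).trans
      (supMulConv_le_iSup_mul_iSup (hweighted a) (hweighted b) ha hb κ)

/-- The analytic functions on the quantum torus of multiradius `r` form a Banach
`K`-algebra: if the coefficient functions `a, b` satisfy the decay condition
`‖a λ‖ ∏ᵢ r i ^ λ i → 0` (along the cofinite filter), then for every `κ` the twisted
convolution is summable, its coefficients again satisfy the decay condition, and the
norm `ν_r` is submultiplicative. -/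
theorem quantumTorus_analytic_banachAlgebra {K : Type*} [NormedField K]
    [IsUltrametricDist K] [CompleteSpace K] {d : ℕ} (q : Kˣ) (hq : ‖(q : K)‖ = 1)
    (φ : (Fin d → ℤ) → (Fin d → ℤ) → ℤ)
    (hskew : ∀ lm mu, φ lm mu = -φ mu lm)
    (haddl : ∀ l₁ l₂ mu, φ (l₁ + l₂) mu = φ l₁ mu + φ l₂ mu)
    (haddr : ∀ lm m₁ m₂, φ lm (m₁ + m₂) = φ lm m₁ + φ lm m₂)
    (r : Fin d → ℝ) (hr : ∀ i, 0 < r i)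
    (a b : (Fin d → ℤ) → K)
    (ha : Tendsto (fun lm : Fin d → ℤ => ‖a lm‖ * ∏ i, r i ^ lm i) cofinite (nhds 0))
    (hb : Tendsto (fun mu : Fin d → ℤ => ‖b mu‖ * ∏ i, r i ^ mu i) cofinite (nhds 0)) :
    -- (i) summability of the twisted convolution
    (∀ κ : Fin d → ℤ,
      Summable fun lm : Fin d → ℤ => ((q ^ φ lm (κ - lm) : Kˣ) : K) * a lm * b (κ - lm)) ∧
    -- (ii) the product again satisfies the decay condition
    Tendsto
      (fun κ : Fin d → ℤ =>
        ‖∑' lm : Fin d → ℤ, ((q ^ φ lm (κ - lm) : Kˣ) : K) * a lm * b (κ - lm)‖ *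
          ∏ i, r i ^ κ i)
      cofinite (nhds 0) ∧
    -- (iii) the norm `ν_r` is submultiplicative
    (⨆ κ : Fin d → ℤ,
        ‖∑' lm : Fin d → ℤ, ((q ^ φ lm (κ - lm) : Kˣ) : K) * a lm * b (κ - lm)‖ *
          ∏ i, r i ^ κ i) ≤
      (⨆ lm : Fin d → ℤ, ‖a lm‖ * ∏ i, r i ^ lm i) *
        (⨆ mu : Fin d → ℤ, ‖b mu‖ * ∏ i, r i ^ mu i) :=
  quantumTorus_analytic_banachAlgebra_general q hq φ r hr a b ha hb
end

section
/- Let K be a field, q ∈ Kˣ a unit, d a natural number, and a : Fin d → K. In the quantum polynomial algebra K[T₁,…,T_d]_q (the quotient of the free algebra K⟨T₁,…,T_d⟩ by the relations TᵢTⱼ = q·TⱼTᵢ for i < j), the family of ordered products b(l) = (T₁ − a₁)^{l(1)}·(T₂ − a₂)^{l(2)}⋯(T_d − a_d)^{l(d)}, indexed by multi-indices l ∈ (Fin d →₀ ℕ) and with factors taken in increasing order of the index i, is a K-vector space basis of K[T₁,…,T_d]_q. (Here aᵢ denotes the scalar a(i)·1 in the algebra.) -/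
/-!
Let `Tᵢ` act on `K[ℕ^d]` (basis `e_m`) by `e_m ↦ q ^ (∑_{j > i} m_j) • e_{m + eᵢ}`. These
operators satisfy the defining relations, so `x ↦ x • e₀` is a `K`-linear map `Ψ` out of the
quantum polynomial algebra. Each factor `Tᵢ - aᵢ` sends a vector supported below `m` (product
order) with nonzero `m`-coefficient to one supported below `m + eᵢ` with nonzero
`(m + eᵢ)`-coefficient, so the `Ψ`-images of the shifted monomials are triangular for the
well-founded product order on `ℕ^d`, hence a basis. For `a = 0` these are the ordered
monomials, which span since the `q`-commutation relations turn `Tᵢ · (ordered monomial)` into a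
multiple of an ordered monomial; so `Ψ` is injective, and the shifted monomials themselves form
a basis.
-/

/-- The defining relations of the quantum polynomial algebra: `Tᵢ Tⱼ = q · Tⱼ Tᵢ`
for `i < j`. -/
inductive QuantumPolyRel (K : Type*) [Field K] (q : Kˣ) (d : ℕ) :
    FreeAlgebra K (Fin d) → FreeAlgebra K (Fin d) → Prop
  | comm (i j : Fin d) (h : i < j) :
      QuantumPolyRel K q d (FreeAlgebra.ι K i * FreeAlgebra.ι K j)
        ((q : K) • (FreeAlgebra.ι K j * FreeAlgebra.ι K i))

/-- The quantum polynomial algebra `K[T₁,…,T_d]_q`. -/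
abbrev QuantumPoly (K : Type*) [Field K] (q : Kˣ) (d : ℕ) : Type _ :=
  RingQuot (QuantumPolyRel K q d)

/-- The generator `Tᵢ` of the quantum polynomial algebra. -/
noncomputable def quantumVar (K : Type*) [Field K] (q : Kˣ) (d : ℕ) (i : Fin d) :
    QuantumPoly K q d :=
  RingQuot.mkAlgHom K (QuantumPolyRel K q d) (FreeAlgebra.ι K i)

/-- The ordered product `(T₁ - a₁)^{l 1} (T₂ - a₂)^{l 2} ⋯ (T_d - a_d)^{l d}`, with
factors taken in increasing order of the index. -/
noncomputable def shiftedMonomial {K : Type*} [Field K] {q : Kˣ} {d : ℕ}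
    (a : Fin d → K) (l : Fin d →₀ ℕ) : QuantumPoly K q d :=
  ((List.finRange d).map fun i =>
    (quantumVar K q d i - algebraMap K (QuantumPoly K q d) (a i)) ^ l i).prod

open Function Set Finsupp

namespace Finsupp

variable {ι R : Type*} [PartialOrder ι]

theorem linearIndependent_of_mem_supported_Iic [Ring R] [NoZeroDivisors R] {f : ι → ι →₀ R}
    (hsupp : ∀ i, f i ∈ supported R R (Iic i)) (hdiag : ∀ i, f i i ≠ 0) :
    LinearIndependent R f := by
  classical
  refine linearIndependent_iff.2 fun c hc => by_contra fun hne => ?_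
  obtain ⟨i, hi⟩ := Finset.exists_maximal (support_nonempty_iff.2 hne)
  have hcoeff : linearCombination R f c i = c i * f i i := by
    rw [linearCombination_apply, Finsupp.sum, finsetSum_apply,
      Finset.sum_eq_single_of_mem i hi.prop]
    · rfl
    · intro j hj hji
      have : f j i = 0 :=
        (mem_supported' R _).1 (hsupp j) i fun hij => hji (hi.eq_of_ge hj hij)
      simp [this]
  rw [hc, zero_apply, eq_comm, mul_eq_zero] at hcoeff
  exact hcoeff.elim (mem_support_iff.1 hi.prop) (hdiag i)

theorem span_range_eq_top_of_mem_supported_Iic [DivisionRing R] [WellFoundedLT ι]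
    {f : ι → ι →₀ R} (hsupp : ∀ i, f i ∈ supported R R (Iic i)) (hdiag : ∀ i, f i i ≠ 0) :
    Submodule.span R (range f) = ⊤ := by
  set P := Submodule.span R (range f)
  have hsingle : ∀ i, single i (1 : R) ∈ P := by
    intro i
    induction i using WellFoundedLT.induction with
    | _ i ih =>
      have hlower : supported R R (Iio i) ≤ P := by
        rw [supported_eq_span_single, Submodule.span_le]
        rintro _ ⟨j, hj, rfl⟩
        exact ih j hj
      have herase : erase i (f i) ∈ P := by
        refine hlower ((mem_supported' R _).2 fun j hj => ?_)
        obtain rfl | hji := eq_or_ne j i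
        · exact erase_same
        · rw [erase_ne hji]
          exact (mem_supported' R _).1 (hsupp i) j fun hj' => hj (lt_of_le_of_ne hj' hji)
      have hdiag_mem : single i (f i i) ∈ P := by
        rw [← add_sub_cancel_right (single i (f i i)) (erase i (f i)), single_add_erase]
        exact sub_mem (Submodule.subset_span ⟨i, rfl⟩) herase
      simpa [smul_single, inv_mul_cancel₀ (hdiag i)] using P.smul_mem (f i i)⁻¹ hdiag_mem
  rw [eq_top_iff, ← supported_univ, supported_eq_span_single, Submodule.span_le]
  rintro _ ⟨i, -, rfl⟩
  exact hsingle i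

end Finsupp

section

variable {R M : Type*} [Semiring R] [AddCommMonoid M] [Preorder M]

def RaisesDegreeBy (φ : Module.End R (M →₀ R)) (δ : M) : Prop :=
  ∀ m v, v ∈ supported R R (Iic m) →
    φ v ∈ supported R R (Iic (m + δ)) ∧ (v m ≠ 0 → φ v (m + δ) ≠ 0)

namespace RaisesDegreeBy

theorem one : RaisesDegreeBy (1 : Module.End R (M →₀ R)) 0 := by
  simp [RaisesDegreeBy]

theorem mul {φ ψ : Module.End R (M →₀ R)} {δ ε : M} (hψ : RaisesDegreeBy ψ ε)
    (hφ : RaisesDegreeBy φ δ) : RaisesDegreeBy (ψ * φ) (δ + ε) := by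
  intro m v hv
  obtain ⟨hφv, hφm⟩ := hφ m v hv
  obtain ⟨hψv, hψm⟩ := hψ (m + δ) (φ v) hφv
  rw [← add_assoc]
  exact ⟨hψv, fun h => hψm (hφm h)⟩

theorem pow {φ : Module.End R (M →₀ R)} {δ : M} (hφ : RaisesDegreeBy φ δ) (n : ℕ) :
    RaisesDegreeBy (φ ^ n) (n • δ) := by
  induction n with
  | zero => simpa using one
  | succ n ih => simpa [pow_succ, succ_nsmul'] using ih.mul hφ

theorem list_prod {α : Type*} {φ : α → Module.End R (M →₀ R)} {δ : α → M} (L : List α)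
    (h : ∀ x ∈ L, RaisesDegreeBy (φ x) (δ x)) :
    RaisesDegreeBy (L.map φ).prod (L.map δ).sum := by
  induction L with
  | nil => simpa using one
  | cons x L ih =>
    have ih' := ih fun y hy => h y (List.mem_cons_of_mem x hy)
    simpa [add_comm] using (h x List.mem_cons_self).mul ih'

end RaisesDegreeBy

end

theorem Submodule.span_eq_top_of_mul_mem {R A : Type*} [CommSemiring R] [Semiring A]
    [Algebra R A] {s t : Set A} (hs : Algebra.adjoin R s = ⊤) (h1 : 1 ∈ Submodule.span R t)
    (hmul : ∀ x ∈ s, ∀ y ∈ t, x * y ∈ Submodule.span R t) : Submodule.span R t = ⊤ := by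
  set S := Submodule.span R t
  have hstable : ∀ x ∈ Algebra.adjoin R s, ∀ y ∈ S, x * y ∈ S := by
    intro x hx
    induction hx using Algebra.adjoin_induction with
    | mem x hx => exact fun y hy =>
        (Submodule.span_le (p := S.comap (LinearMap.mulLeft R x))).2 (hmul x hx) hy
    | algebraMap r => exact fun y hy => by simpa [Algebra.smul_def] using S.smul_mem r hy
    | add x x' _ _ hx hx' =>
      exact fun y hy => by rw [add_mul]; exact add_mem (hx y hy) (hx' y hy)
    | mul x x' _ _ hx hx' => exact fun y hy => by rw [mul_assoc]; exact hx _ (hx' y hy)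
  refine eq_top_iff.2 fun x _ => ?_
  simpa using hstable x (hs ▸ Algebra.mem_top) 1 h1

theorem mul_pow_eq_smul_of_mul_eq_smul {R A : Type*} [CommSemiring R] [Semiring A] [Algebra R A]
    {x y : A} {c : R} (h : x * y = c • (y * x)) (n : ℕ) : x * y ^ n = c ^ n • (y ^ n * x) := by
  induction n with
  | zero => simp
  | succ n ih =>
    rw [pow_succ, ← mul_assoc, ih, smul_mul_assoc, mul_assoc, h, mul_smul_comm, smul_smul,
      ← mul_assoc, ← pow_succ, ← pow_succ]

namespace QuantumPoly

variable {K : Type*} [Field K] {q : Kˣ} {d : ℕ}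

lemma quantumVar_mul_quantumVar_of_lt {i j : Fin d} (h : i < j) :
    quantumVar K q d i * quantumVar K q d j =
      (q : K) • (quantumVar K q d j * quantumVar K q d i) := by
  have := RingQuot.mkAlgHom_rel K (QuantumPolyRel.comm (q := q) i j h)
  rwa [map_mul, map_smul, map_mul] at this

lemma quantumVar_mul_quantumVar_of_gt {i j : Fin d} (h : j < i) :
    quantumVar K q d i * quantumVar K q d j =
      (q : K)⁻¹ • (quantumVar K q d j * quantumVar K q d i) := by
  rw [quantumVar_mul_quantumVar_of_lt h, inv_smul_smul₀ q.ne_zero]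

variable (K q d) in
lemma adjoin_range_quantumVar : Algebra.adjoin K (range (quantumVar K q d)) = ⊤ := by
  have : range (quantumVar K q d) =
      RingQuot.mkAlgHom K (QuantumPolyRel K q d) '' range (FreeAlgebra.ι K) := by
    rw [← range_comp]; rfl
  rw [this, ← AlgHom.map_adjoin, FreeAlgebra.adjoin_range_ι, Algebra.map_top,
    AlgHom.range_eq_top]
  exact RingQuot.mkAlgHom_surjective K _

variable (K q d) in
noncomputable def orderedMonomial (L : List (Fin d)) (l : Fin d →₀ ℕ) : QuantumPoly K q d :=
  (L.map fun j => quantumVar K q d j ^ l j).prod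

lemma quantumVar_mul_orderedMonomial {i : Fin d} {L : List (Fin d)}
    (hL : L.Pairwise (· < ·)) (hi : i ∈ L) (l : Fin d →₀ ℕ) :
    ∃ c : K, quantumVar K q d i * orderedMonomial K q d L l =
      c • orderedMonomial K q d L (l + single i 1) := by
  induction L with
  | nil => simp at hi
  | cons j L ih =>
    rw [List.pairwise_cons] at hL
    simp only [orderedMonomial, List.map_cons, List.prod_cons] at ih ⊢
    obtain rfl | hji := eq_or_ne j i
    · have htail : (L.map fun k => quantumVar K q d k ^ (l + single j 1 : Fin d →₀ ℕ) k) =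
          L.map fun k => quantumVar K q d k ^ l k :=
        List.map_congr_left fun k hk => by simp [(hL.1 k hk).ne]
      refine ⟨1, ?_⟩
      rw [htail, one_smul, ← mul_assoc, ← pow_succ']
      simp
    · have hiL : i ∈ L := (List.mem_cons.1 hi).resolve_left hji.symm
      obtain ⟨c, hc⟩ := ih hL.2 hiL
      refine ⟨(q : K)⁻¹ ^ l j * c, ?_⟩
      have hcomm := mul_pow_eq_smul_of_mul_eq_smul
        (quantumVar_mul_quantumVar_of_gt (K := K) (q := q) (hL.1 i hiL))
      rw [← mul_assoc, hcomm, smul_mul_assoc, mul_assoc, hc, mul_smul_comm, smul_smul]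
      simp [single_apply, hji]

variable (K q d) in
lemma span_range_shiftedMonomial_zero :
    Submodule.span K (range (shiftedMonomial (q := q) (0 : Fin d → K))) = ⊤ := by
  have hord : shiftedMonomial (q := q) (0 : Fin d → K) =
      orderedMonomial K q d (List.finRange d) := by
    ext l
    simp [shiftedMonomial, orderedMonomial]
  have hone : orderedMonomial K q d (List.finRange d) 0 = 1 := by simp [orderedMonomial]
  rw [hord]
  refine Submodule.span_eq_top_of_mul_mem (adjoin_range_quantumVar K q d)
    (hone ▸ Submodule.subset_span (mem_range_self 0)) ?_
  rintro _ ⟨i, rfl⟩ _ ⟨l, rfl⟩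
  obtain ⟨c, hc⟩ := quantumVar_mul_orderedMonomial (K := K) (q := q)
    (List.sortedLT_finRange d).pairwise (List.mem_finRange i) l
  rw [hc]
  exact Submodule.smul_mem _ c (Submodule.subset_span ⟨_, rfl⟩)

def twist (i : Fin d) (m : Fin d →₀ ℕ) : ℕ := ∑ j ∈ Finset.Ioi i, m j

lemma twist_add_single (i j : Fin d) (n : ℕ) (m : Fin d →₀ ℕ) :
    twist i (m + single j n) = twist i m + if i < j then n else 0 := by
  simp [twist, Finset.sum_add_distrib, single_apply]

variable (q) in
noncomputable def varOp (i : Fin d) : Module.End K ((Fin d →₀ ℕ) →₀ K) :=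
  linearCombination K fun m => single (m + single i 1) ((q : K) ^ twist i m)

lemma varOp_single (i : Fin d) (m : Fin d →₀ ℕ) (r : K) :
    varOp q i (single m r) = single (m + single i 1) (r * (q : K) ^ twist i m) := by
  rw [varOp, linearCombination_single, smul_single, smul_eq_mul]

lemma varOp_mul_varOp_of_lt {i j : Fin d} (h : i < j) :
    varOp q i * varOp q j = (q : K) • (varOp q j * varOp q i) := by
  refine lhom_ext fun m r => ?_
  simp only [Module.End.mul_apply, LinearMap.smul_apply, varOp_single, smul_single,
    twist_add_single, if_pos h, if_neg h.not_gt]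
  congr 1
  · abel
  · rw [smul_eq_mul, pow_add, pow_add]; ring

lemma varOp_mem_supported_Iic (i : Fin d) {m : Fin d →₀ ℕ} {v : (Fin d →₀ ℕ) →₀ K}
    (hv : v ∈ supported K K (Iic m)) : varOp q i v ∈ supported K K (Iic (m + single i 1)) := by
  suffices h : supported K K (Iic m) ≤
      (supported K K (Iic (m + single i 1))).comap (varOp q i) from h hv
  rw [supported_eq_span_single, Submodule.span_le]
  rintro _ ⟨m', hm', rfl⟩
  rw [SetLike.mem_coe, Submodule.mem_comap, varOp_single]
  exact single_mem_supported K _ (mem_Iic.2 (add_le_add_left (mem_Iic.1 hm') _))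

lemma varOp_apply_add_single (i : Fin d) (v : (Fin d →₀ ℕ) →₀ K) (m : Fin d →₀ ℕ) :
    varOp q i v (m + single i 1) = (q : K) ^ twist i m * v m := by
  induction v using Finsupp.induction_linear with
  | zero => simp
  | add v w hv hw => simp [hv, hw, mul_add]
  | single m' r =>
    obtain rfl | hne := eq_or_ne m' m
    · simp [varOp_single, mul_comm]
    · simp [varOp_single, hne]

lemma raisesDegreeBy_varOp_sub_algebraMap (i : Fin d) (c : K) :
    RaisesDegreeBy (varOp q i - algebraMap K _ c) (single i 1) := by
  intro m v hv
  have hv' : v ∈ supported K K (Iic (m + single i 1)) :=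
    supported_mono (Iic_subset_Iic.2 le_self_add) hv
  have hm : v (m + single i 1) = 0 :=
    (mem_supported' K _).1 hv _ fun h => by simpa using Finsupp.le_def.1 h i
  refine ⟨sub_mem (varOp_mem_supported_Iic i hv) (Submodule.smul_mem _ c hv'), fun h => ?_⟩
  simpa [varOp_apply_add_single, hm] using h

variable (K q d) in
noncomputable def toEnd : QuantumPoly K q d →ₐ[K] Module.End K ((Fin d →₀ ℕ) →₀ K) :=
  RingQuot.liftAlgHom K ⟨FreeAlgebra.lift K (varOp q), by
    rintro _ _ ⟨i, j, h⟩
    simp [varOp_mul_varOp_of_lt h]⟩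

lemma toEnd_quantumVar (i : Fin d) : toEnd K q d (quantumVar K q d i) = varOp q i := by
  simp [toEnd, quantumVar]

variable (K q d) in
noncomputable def applySingleZero : QuantumPoly K q d →ₗ[K] (Fin d →₀ ℕ) →₀ K :=
  LinearMap.applyₗ (single 0 1) ∘ₗ (toEnd K q d).toLinearMap

@[simp]
lemma applySingleZero_apply (x : QuantumPoly K q d) :
    applySingleZero K q d x = toEnd K q d x (single 0 1) :=
  rfl

lemma raisesDegreeBy_toEnd_shiftedMonomial (a : Fin d → K) (l : Fin d →₀ ℕ) :
    RaisesDegreeBy (toEnd K q d (shiftedMonomial a l)) l := by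
  have hl : ((List.finRange d).map fun i => l i • single i 1).sum = l := by
    rw [← Fin.sum_univ_def]
    simp
  have h := RaisesDegreeBy.list_prod (List.finRange d) fun i _ =>
    (raisesDegreeBy_varOp_sub_algebraMap (q := q) i (a i)).pow (l i)
  rw [hl] at h
  convert h using 3
  simp [shiftedMonomial, map_list_prod, Function.comp_def, toEnd_quantumVar]

section Triangular

variable (a : Fin d → K)

lemma applySingleZero_shiftedMonomial_mem_supported_Iic (l : Fin d →₀ ℕ) :
    applySingleZero K q d (shiftedMonomial a l) ∈ supported K K (Iic l) := by
  simpa using (raisesDegreeBy_toEnd_shiftedMonomial a l 0 (single 0 1)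
    (single_mem_supported K 1 self_mem_Iic)).1

lemma applySingleZero_shiftedMonomial_apply_self_ne_zero (l : Fin d →₀ ℕ) :
    applySingleZero K q d (shiftedMonomial a l) l ≠ 0 := by
  simpa using (raisesDegreeBy_toEnd_shiftedMonomial a l 0 (single 0 1)
    (single_mem_supported K 1 self_mem_Iic)).2

lemma linearIndependent_applySingleZero_shiftedMonomial :
    LinearIndependent K (applySingleZero K q d ∘ shiftedMonomial a) :=
  linearIndependent_of_mem_supported_Iic (applySingleZero_shiftedMonomial_mem_supported_Iic a)
    (applySingleZero_shiftedMonomial_apply_self_ne_zero a)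

lemma span_range_applySingleZero_shiftedMonomial :
    Submodule.span K (range (applySingleZero K q d ∘ shiftedMonomial a)) = ⊤ :=
  span_range_eq_top_of_mem_supported_Iic (applySingleZero_shiftedMonomial_mem_supported_Iic a)
    (applySingleZero_shiftedMonomial_apply_self_ne_zero a)

end Triangular

variable (K q d) in
lemma applySingleZero_injective : Injective (applySingleZero K q d) :=
  LinearMap.injective_of_linearIndependent (span_range_shiftedMonomial_zero K q d)
    (linearIndependent_applySingleZero_shiftedMonomial 0)

end QuantumPoly

/-- The ordered products `(T₁ - a₁)^{l 1} ⋯ (T_d - a_d)^{l d}`, indexed by multi-indices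
`l : Fin d →₀ ℕ`, form a `K`-vector space basis of the quantum polynomial algebra
`K[T₁,…,T_d]_q`. -/
theorem shiftedMonomials_isBasis (K : Type*) [Field K] (q : Kˣ) (d : ℕ) (a : Fin d → K) :
    LinearIndependent K (fun l : Fin d →₀ ℕ => (shiftedMonomial (q := q) a l)) ∧
      Submodule.span K (Set.range fun l : Fin d →₀ ℕ =>
        (shiftedMonomial (q := q) a l)) = ⊤ := by
  refine ⟨(QuantumPoly.linearIndependent_applySingleZero_shiftedMonomial a).of_comp _, ?_⟩
  rw [← Submodule.comap_map_eq_of_injective (QuantumPoly.applySingleZero_injective K q d)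
    (Submodule.span K _), Submodule.map_span, ← range_comp,
    QuantumPoly.span_range_applySingleZero_shiftedMonomial, Submodule.comap_top]
end
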